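/- For 1 < q < ∞, if h is analytic on the unit disc and H(z) = (1/z)∫_0^z h(ζ) dζ (with H(0) = h(0)), then ‖H‖_{H^q} ≤ ‖h‖_{H^q}. -/

import Mathlib

open MeasureTheory Complex Filter Topology Real
open scoped ENNReal

noncomputable section

/-- The open unit disc in `ℂ`. -/
def unitDisc : Set ℂ := Metric.ball 0 1

/-- `f` is analytic (holomorphic) on the unit disc. -/
def AnalyticOnDisc (f : ℂ → ℂ) : Prop := DifferentiableOn ℂ f unitDisc

/-- The point `r e^{iθ}`. -/
def circlePoint (r θ : ℝ) : ℂ := (r : ℂ) * Complex.exp (θ * Complex.I)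

/-- The `p`-th integral mean `M_p(f,r)` (with normalized measure on the circle). -/
def intMean (p : ℝ) (f : ℂ → ℂ) (r : ℝ) : ℝ :=
  ((2 * π)⁻¹ * ∫ θ in (0:ℝ)..(2 * π), ‖f (circlePoint r θ)‖ ^ p) ^ p⁻¹

/-- The Hardy space norm `‖f‖_{H^p} = sup_{0 ≤ r < 1} M_p(f,r)`. -/
def hardyNorm (p : ℝ) (f : ℂ → ℂ) : ℝ := sSup (intMean p f '' Set.Ico 0 1)

/-- Extended-real-valued Hardy norm. -/
def eHardyNorm (p : ℝ) (f : ℂ → ℂ) : ℝ≥0∞ :=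
  ⨆ r ∈ Set.Ico (0:ℝ) 1, ENNReal.ofReal (intMean p f r)

/-- Membership in the Hardy space `H^p`: analytic with bounded integral means. -/
def MemHardy (p : ℝ) (f : ℂ → ℂ) : Prop :=
  AnalyticOnDisc f ∧ BddAbove (intMean p f '' Set.Ico 0 1)

/-- Normalized area measure `σ` on the unit disc, `σ(𝔻) = 1`. -/
def areaMeasure : Measure ℂ := (ENNReal.ofReal π)⁻¹ • (volume.restrict unitDisc)

/-- The Bergman space norm `‖f‖_{A^p}`. -/
def bergmanNorm (p : ℝ) (f : ℂ → ℂ) : ℝ := (∫ z, ‖f z‖ ^ p ∂areaMeasure) ^ p⁻¹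

/-- Membership in the Bergman space `A^p`. -/
def MemBergman (p : ℝ) (f : ℂ → ℂ) : Prop :=
  AnalyticOnDisc f ∧ Integrable (fun z => ‖f z‖ ^ p) areaMeasure

/-- The pairing `φ(f) = ∫_𝔻 f conj(k) dσ` of a kernel `k` with `f`. -/
def pairing (k f : ℂ → ℂ) : ℂ := ∫ z, f z * (starRingEnd ℂ) (k z) ∂areaMeasure

/-- The norm of the functional on `A^p` with kernel `k`. -/
def opNorm (p : ℝ) (k : ℂ → ℂ) : ℝ :=
  sSup ((fun f => (pairing k f).re) '' {f | MemBergman p f ∧ bergmanNorm p f ≤ 1})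

/-- `F` is the extremal function for the kernel `k` in `A^p`. -/
def IsExtremal (p : ℝ) (k F : ℂ → ℂ) : Prop :=
  MemBergman p F ∧ bergmanNorm p F = 1 ∧ (pairing k F).re = opNorm p k

/-- The kernel is not identically zero on the disc. -/
def NontrivialOnDisc (k : ℂ → ℂ) : Prop := ∃ z ∈ unitDisc, k z ≠ 0

/-- `sgn w = w/|w|`, `sgn 0 = 0`. -/
def csgn (w : ℂ) : ℂ := if w = 0 then 0 else w / (‖w‖ : ℂ)

/-- `K(z) = (1/z) ∫_0^z k(ζ) dζ = ∫_0^1 k(tz) dt`. -/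
def Kfun (k : ℂ → ℂ) (z : ℂ) : ℂ := ∫ t in (0:ℝ)..1, k ((t : ℂ) * z)

/-!
On the circle of radius `r`, `H(r e^{iθ}) = ∫₀¹ h(t r e^{iθ}) dt` is an average over a
probability measure, so Jensen's inequality for `x ↦ x^q` gives
`|H|^q ≤ ∫₀¹ |h(t r e^{iθ})|^q dt`. Integrating in `θ` and exchanging the integrals bounds
`M_q(H, r)^q` by the average over `t ∈ (0, 1]` of `M_q(h, t r)^q`, each of which is at most
`‖h‖_{H^q}^q`.
-/

lemma norm_integral_rpow_le_integral_norm_rpow {α E : Type*} [MeasurableSpace α]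
    [NormedAddCommGroup E] [NormedSpace ℝ E] {μ : Measure α} [IsProbabilityMeasure μ]
    {q : ℝ} (hq : 1 ≤ q) {g : α → E} (hg : Integrable g μ)
    (hgq : Integrable (fun x => ‖g x‖ ^ q) μ) :
    ‖∫ x, g x ∂μ‖ ^ q ≤ ∫ x, ‖g x‖ ^ q ∂μ :=
  calc ‖∫ x, g x ∂μ‖ ^ q ≤ (∫ x, ‖g x‖ ∂μ) ^ q := by
        gcongr; exact norm_integral_le_integral_norm g
    _ ≤ ∫ x, ‖g x‖ ^ q ∂μ :=
        (convexOn_rpow hq).map_integral_le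
          (continuousOn_id.rpow_const fun _ _ => Or.inr (by linarith)) isClosed_Ici
          (ae_of_all _ fun x => norm_nonneg (g x)) hg.norm hgq

lemma norm_setIntegral_Ioc_rpow_le {E : Type*} [NormedAddCommGroup E] [NormedSpace ℝ E]
    {q : ℝ} (hq : 1 ≤ q) {g : ℝ → E} (hg : ContinuousOn g (Set.Icc 0 1)) :
    ‖∫ t in Set.Ioc (0:ℝ) 1, g t‖ ^ q ≤ ∫ t in Set.Ioc (0:ℝ) 1, ‖g t‖ ^ q :=
  have : IsProbabilityMeasure (volume.restrict (Set.Ioc (0:ℝ) 1)) := ⟨by simp⟩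
  norm_integral_rpow_le_integral_norm_rpow hq
    (hg.integrableOn_Icc.mono_set Set.Ioc_subset_Icc_self)
    ((hg.norm.rpow_const fun _ _ => Or.inr (by linarith)).integrableOn_Icc.mono_set
      Set.Ioc_subset_Icc_self)

lemma norm_circlePoint {r : ℝ} (hr : 0 ≤ r) (θ : ℝ) : ‖circlePoint r θ‖ = r := by
  simp [circlePoint, Complex.norm_exp_ofReal_mul_I, abs_of_nonneg hr]

lemma circlePoint_mul (t r θ : ℝ) : circlePoint (t * r) θ = t * circlePoint r θ := by
  simp only [circlePoint]; push_cast; ring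

lemma intMean_le_iff {p C : ℝ} (hp : 0 < p) (hC : 0 ≤ C) (f : ℂ → ℂ) (r : ℝ) :
    intMean p f r ≤ C ↔ ∫ θ in (0:ℝ)..2 * π, ‖f (circlePoint r θ)‖ ^ p ≤ 2 * π * C ^ p := by
  have hI : 0 ≤ ∫ θ in (0:ℝ)..2 * π, ‖f (circlePoint r θ)‖ ^ p :=
    intervalIntegral.integral_nonneg (by positivity) fun _ _ => by positivity
  rw [intMean, Real.rpow_inv_le_iff_of_pos (by positivity) hC hp, inv_mul_le_iff₀ (by positivity)]

lemma eHardyNorm_le_of_forall_intMean_le {p : ℝ} {f g : ℂ → ℂ}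
    (hfg : ∀ C, 0 ≤ C → (∀ s ∈ Set.Ico (0:ℝ) 1, intMean p g s ≤ C) →
      ∀ r ∈ Set.Ico (0:ℝ) 1, intMean p f r ≤ C) :
    eHardyNorm p f ≤ eHardyNorm p g := by
  refine iSup₂_le fun r hr => ?_
  rcases eq_or_ne (eHardyNorm p g) ⊤ with htop | htop
  · exact htop ▸ le_top
  rw [← ENNReal.ofReal_toReal htop]
  refine ENNReal.ofReal_le_ofReal (hfg _ ENNReal.toReal_nonneg (fun s hs => ?_) r hr)
  rw [← ENNReal.ofReal_le_iff_le_toReal htop]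
  exact le_iSup₂ (f := fun s (_ : s ∈ Set.Ico (0:ℝ) 1) => ENNReal.ofReal (intMean p g s)) s hs

lemma continuousOn_comp_mul_circlePoint {r : ℝ} (hr : 0 ≤ r) {h : ℂ → ℂ}
    (hh : ContinuousOn h (Metric.closedBall 0 r)) :
    ContinuousOn (fun p : ℝ × ℝ => h (p.2 * circlePoint r p.1)) (Set.univ ×ˢ Set.Icc 0 1) := by
  refine hh.comp (by unfold circlePoint; fun_prop) fun p ⟨_, ht⟩ => ?_
  rw [Metric.mem_closedBall, dist_zero_right, norm_mul, Complex.norm_real, Real.norm_eq_abs,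
    abs_of_nonneg ht.1, norm_circlePoint hr]
  exact mul_le_of_le_one_left hr ht.2

lemma integral_norm_Kfun_rpow_le {q r M : ℝ} (hq : 1 ≤ q) (hr : 0 ≤ r) {h : ℂ → ℂ}
    (hh : ContinuousOn h (Metric.closedBall 0 r))
    (hM : ∀ t ∈ Set.Ioc (0:ℝ) 1, ∫ θ in (0:ℝ)..2 * π, ‖h (circlePoint (t * r) θ)‖ ^ q ≤ M) :
    ∫ θ in (0:ℝ)..2 * π, ‖Kfun h (circlePoint r θ)‖ ^ q ≤ M := by
  have hcont := continuousOn_comp_mul_circlePoint hr hh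
  set G : ℝ → ℝ → ℝ := fun θ t => ‖h (t * circlePoint r θ)‖ ^ q
  have hG : Integrable (Function.uncurry G)
      ((volume.restrict (Set.Ioc 0 (2 * π))).prod (volume.restrict (Set.Ioc (0:ℝ) 1))) := by
    rw [Measure.prod_restrict, ← Measure.volume_eq_prod]
    refine IntegrableOn.mono_set ?_ (Set.prod_mono Set.Ioc_subset_Icc_self Set.Ioc_subset_Icc_self)
    exact ((hcont.mono (Set.prod_mono (Set.subset_univ _) subset_rfl)).norm.rpow_const
      fun _ _ => Or.inr (by linarith)).integrableOn_compact (isCompact_Icc.prod isCompact_Icc)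
  have jensen (θ : ℝ) :
      ‖∫ t in Set.Ioc (0:ℝ) 1, h (t * circlePoint r θ)‖ ^ q ≤ ∫ t in Set.Ioc (0:ℝ) 1, G θ t :=
    norm_setIntegral_Ioc_rpow_le hq
      (hcont.comp (continuous_const.prodMk continuous_id).continuousOn
        fun t ht => ⟨Set.mem_univ θ, ht⟩)
  simp only [Kfun, intervalIntegral.integral_of_le zero_le_one,
    intervalIntegral.integral_of_le (by positivity : 0 ≤ 2 * π)] at hM ⊢
  calc ∫ θ in Set.Ioc 0 (2 * π), ‖∫ t in Set.Ioc (0:ℝ) 1, h (t * circlePoint r θ)‖ ^ q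
      ≤ ∫ θ in Set.Ioc 0 (2 * π), ∫ t in Set.Ioc (0:ℝ) 1, G θ t :=
        integral_mono_of_nonneg (ae_of_all _ fun _ => by positivity) hG.integral_prod_left
          (ae_of_all _ jensen)
    _ = ∫ t in Set.Ioc (0:ℝ) 1, ∫ θ in Set.Ioc 0 (2 * π), G θ t := integral_integral_swap hG
    _ ≤ ∫ _ in Set.Ioc (0:ℝ) 1, M :=
        setIntegral_mono_on hG.integral_prod_right (integrableOn_const (by simp) enorm_ne_top)
          measurableSet_Ioc fun t ht => by simpa only [G, circlePoint_mul] using hM t ht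
    _ = M := by simp

/-- If `h` is analytic on the disc and `H(z) = (1/z)∫_0^z h(ζ)dζ` (radial integral,
so `H(z) = ∫_0^1 h(tz) dt`), then `‖H‖_{H^q} ≤ ‖h‖_{H^q}` for `1 < q < ∞`. -/
theorem averaged_antiderivative_norm_bound (q : ℝ) (hq : 1 < q)
    (h : ℂ → ℂ) (hh : AnalyticOnDisc h) :
    eHardyNorm q (fun z => ∫ t in (0:ℝ)..1, h ((t:ℂ) * z)) ≤ eHardyNorm q h := by
  have hq0 : 0 < q := one_pos.trans hq
  refine eHardyNorm_le_of_forall_intMean_le fun C hC hbound r ⟨hr0, hr1⟩ => ?_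
  rw [intMean_le_iff hq0 hC]
  refine integral_norm_Kfun_rpow_le hq.le hr0
    (hh.continuousOn.mono (Metric.closedBall_subset_ball hr1)) fun t ⟨ht0, ht1⟩ => ?_
  rw [← intMean_le_iff hq0 hC]
  exact hbound _ ⟨by positivity, (mul_le_of_le_one_left hr0 ht1).trans_lt hr1⟩
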